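/- Let R be a commutative G-graded ring possessing a unique maximal homogeneous ideal, and let M be a finitely generated G-graded R-module. If M is projective as an R-module, then M is free as an R-module. -/

import Mathlib

/-!
Let `J` be the unique maximal homogeneous ideal. By Zorn's lemma it contains every proper
homogeneous ideal, so every homogeneous element outside `J` is a unit.

Take a homogeneous generating family `x` of `M` from which no member can be dropped. A
homogeneous relation `∑ vⱼ xⱼ = 0` with some `vⱼ ∉ J` would have a unit coefficient and make
`xⱼ` redundant, and the relation module `K` is spanned by its homogeneous parts, so `K ⊆ J • Rⁿ`.
Since `M` is projective, `K` is a direct summand of `Rⁿ`; hence it is finitely generated and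
`K ≤ J • K`, and Nakayama gives `r ∈ 1 + J` with `r • K = 0`. The degree-zero part of `r` lies
in `1 + J`, so it is a unit, and `r` annihilates no nonzero homogeneous element. Therefore
`K = 0` and `x` is a basis.
-/

open DirectSum Submodule

namespace Ideal

variable {ι R : Type*} [DecidableEq ι] [AddMonoid ι] [CommRing R]
  (𝒜 : ι → AddSubgroup R) [GradedRing 𝒜]

def IsMaximalHomogeneous (J : Ideal R) : Prop :=
  J.IsHomogeneous 𝒜 ∧ J ≠ ⊤ ∧ ∀ K : Ideal R, K.IsHomogeneous 𝒜 → K ≠ ⊤ → J ≤ K → K = J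

variable {𝒜}

theorem exists_isMaximalHomogeneous_le {I : Ideal R} (hI : I.IsHomogeneous 𝒜) (hI_ne : I ≠ ⊤) :
    ∃ J, IsMaximalHomogeneous 𝒜 J ∧ I ≤ J := by
  let S := {K : Ideal R | K.IsHomogeneous 𝒜 ∧ K ≠ ⊤}
  have hchain : ∀ c ⊆ S, IsChain (· ≤ ·) c → ∀ K ∈ c, ∃ ub ∈ S, ∀ L ∈ c, L ≤ ub := by
    intro c hcS hc K hK
    refine ⟨sSup c, ⟨IsHomogeneous.sSup fun L hL => (hcS hL).1, ?_⟩, fun _ => le_sSup⟩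
    exact (CompleteLattice.IsCompactElement.directed_sSup_lt_of_lt isCompactElement_top
      ⟨K, hK⟩ hc.directedOn fun L hL => lt_top_iff_ne_top.2 (hcS hL).2).ne
  obtain ⟨J, hIJ, hJ⟩ := zorn_le_nonempty₀ S hchain I ⟨hI, hI_ne⟩
  exact ⟨J, ⟨hJ.prop.1, hJ.prop.2, fun K hK hK_ne hJK => (hJ.eq_of_le ⟨hK, hK_ne⟩ hJK).symm⟩,
    hIJ⟩

theorem isUnit_of_mem_of_notMem {J : Ideal R} (hJ : ∀ K, IsMaximalHomogeneous 𝒜 K → K = J)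
    {i : ι} {a : R} (ha : a ∈ 𝒜 i) (haJ : a ∉ J) : IsUnit a := by
  by_contra h
  have hspan : (span {a}).IsHomogeneous 𝒜 :=
    homogeneous_span 𝒜 {a} fun _ hb => ⟨i, Set.mem_singleton_iff.1 hb ▸ ha⟩
  obtain ⟨K, hK, haK⟩ := exists_isMaximalHomogeneous_le hspan (by rwa [Ne, span_singleton_eq_top])
  exact haJ (hJ K hK ▸ haK (mem_span_singleton_self a))

end Ideal

theorem Ideal.IsHomogeneous.eq_zero_of_mul_eq_zero_of_sub_one_mem {ι R : Type*} [DecidableEq ι]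
    [AddRightCancelMonoid ι] [CommRing R] {𝒜 : ι → AddSubgroup R} [GradedRing 𝒜] {J : Ideal R}
    (hJ : J.IsHomogeneous 𝒜) (hJ_ne : J ≠ ⊤) (hunit : ∀ {i a}, a ∈ 𝒜 i → a ∉ J → IsUnit a)
    {r a : R} (hr : r - 1 ∈ J) {i : ι} (ha : a ∈ 𝒜 i) (h : r * a = 0) : a = 0 := by
  have hr₀ : (decompose 𝒜 r 0 : R) - 1 ∈ J := by
    have := hJ 0 hr
    rwa [decompose_sub, DirectSum.sub_apply, AddSubgroupClass.coe_sub,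
      decompose_of_mem_same 𝒜 SetLike.GradedOne.one_mem] at this
  have hr₀J : (decompose 𝒜 r 0 : R) ∉ J := fun h =>
    hJ_ne ((Ideal.eq_top_iff_one J).2 (by simpa using J.sub_mem h hr₀))
  have : (decompose 𝒜 r 0 : R) * a = 0 := by
    rw [← coe_decompose_mul_add_of_right_mem 𝒜 ha, zero_add, h, decompose_zero,
      DirectSum.zero_apply, ZeroMemClass.coe_zero]
  exact (hunit (SetLike.coe_mem _) hr₀J).mul_right_eq_zero.1 this

theorem Submodule.exists_finset_span_image_compl_ne_top {R M ι : Type*} [Semiring R]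
    [AddCommMonoid M] [Module R M] {x : ι → M} {t : Finset ι} (ht : span R (x '' t) = ⊤) :
    ∃ u : Finset ι, span R (Set.range fun i : u => x i) = ⊤ ∧
      ∀ i : u, span R ((fun i : u => x i) '' {i}ᶜ) ≠ ⊤ := by
  classical
  obtain ⟨u, hu⟩ :=
    exists_minimal_of_wellFoundedLT (fun u : Finset ι => span R (x '' u) = ⊤) ⟨t, ht⟩
  refine ⟨u, (Set.image_eq_range x u).symm ▸ hu.prop, fun i hi => ?_⟩
  have herase : (fun i : u => x i) '' {i}ᶜ = x '' ↑(u.erase i) := by aesop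
  rw [herase] at hi
  exact Finset.erase_ne_self.2 i.2 (hu.eq_of_le hi (Finset.erase_subset _ _))

section LinearAlgebra

variable {R M N κ : Type*} [CommRing R] [AddCommGroup M] [Module R M]

theorem mem_span_image_compl_of_sum_smul_eq_zero [Fintype κ] {x : κ → M} {v : κ → R}
    (hv : ∑ j, v j • x j = 0) {i : κ} (hi : IsUnit (v i)) : x i ∈ span R (x '' {i}ᶜ) := by
  classical
  rw [Fintype.sum_eq_add_sum_compl i, add_eq_zero_iff_eq_neg] at hv
  rw [← smul_mem_iff_of_isUnit _ hi, hv]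
  exact neg_mem (sum_mem fun j hj => smul_mem _ _ (subset_span ⟨j, by simpa using hj, rfl⟩))

theorem mem_smul_top_of_forall_apply_mem [Finite κ] {I : Ideal R} {v : κ → R}
    (hv : ∀ j, v j ∈ I) : v ∈ I • (⊤ : Submodule R (κ → R)) := by
  classical
  have := Fintype.ofFinite κ
  rw [pi_eq_sum_univ v]
  exact sum_mem fun j _ => smul_mem_smul (hv j) mem_top

variable [AddCommGroup N] [Module R N]

theorem LinearMap.ker_le_smul_ker_of_comp_eq_id {φ : N →ₗ[R] M} {s : M →ₗ[R] N}
    (hs : φ ∘ₗ s = LinearMap.id) {I : Ideal R} (h : LinearMap.ker φ ≤ I • ⊤) :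
    LinearMap.ker φ ≤ I • LinearMap.ker φ := by
  intro v hv
  let p : N →ₗ[R] N := LinearMap.id - s ∘ₗ φ
  have hp : map p ⊤ ≤ LinearMap.ker φ := by
    rintro _ ⟨w, -, rfl⟩
    simp [p, show φ (s (φ w)) = φ w from LinearMap.congr_fun hs (φ w)]
  have hpv : p v = v := by simp [p, LinearMap.mem_ker.1 hv]
  rw [← hpv]
  exact smul_mono_right I hp (map_smul'' I ⊤ p ▸ mem_map_of_mem (h hv))

end LinearAlgebra

theorem DirectSum.coe_decompose_smul_add_of_right_mem {ι R M : Type*} [DecidableEq ι]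
    [AddRightCancelMonoid ι] [CommRing R] (𝒜 : ι → AddSubgroup R) [GradedRing 𝒜]
    [AddCommGroup M] [Module R M] (ℳ : ι → AddSubgroup M) [Decomposition ℳ]
    [SetLike.GradedSMul 𝒜 ℳ] (a : R) {x : M} {i j : ι} (hx : x ∈ ℳ j) :
    (decompose ℳ (a • x) (i + j) : M) = (decompose 𝒜 a i : R) • x := by
  induction a using Decomposition.inductionOn 𝒜 with
  | zero => simp
  | @homogeneous k a =>
    obtain ⟨a, ha⟩ := a
    have hax : a • x ∈ ℳ (k + j) := SetLike.GradedSMul.smul_mem ha hx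
    by_cases hk : k = i
    · subst hk
      rw [decompose_of_mem_same ℳ hax, decompose_of_mem_same 𝒜 ha]
    · rw [decompose_of_mem_ne ℳ hax (hk ∘ add_right_cancel), decompose_of_mem_ne 𝒜 ha hk,
        zero_smul]
  | add b c hb hc => simp only [add_smul, decompose_add, add_apply, AddMemClass.coe_add, hb, hc]

theorem DirectSum.exists_finset_span_decompose_eq_top {G R M : Type*} [AddCommGroup G]
    [DecidableEq G] [CommRing R] [AddCommGroup M] [Module R M] (ℳ : G → AddSubgroup M)
    [Decomposition ℳ] [Module.Finite R M] :
    ∃ t : Finset (M × G), span R ((fun p : M × G => (decompose ℳ p.1 p.2 : M)) '' t) = ⊤ := by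
  classical
  obtain ⟨s, hs⟩ := Module.Finite.fg_top (R := R) (M := M)
  refine ⟨s ×ˢ s.biUnion fun y => (decompose ℳ y).support, eq_top_iff.2 ?_⟩
  rw [← hs, span_le]
  intro y hy
  rw [← sum_support_decompose ℳ y]
  exact sum_mem fun g hg =>
    subset_span ⟨(y, g), Finset.mem_product.2 ⟨hy, Finset.mem_biUnion.2 ⟨y, hy, hg⟩⟩, rfl⟩

section GradedModule

variable {G R M κ : Type*} [AddCommGroup G] [DecidableEq G] [CommRing R]
  {𝒜 : G → AddSubgroup R} [GradedRing 𝒜] [AddCommGroup M] [Module R M]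
  {ℳ : G → AddSubgroup M} [Decomposition ℳ] [SetLike.GradedSMul 𝒜 ℳ]

variable (𝒜) in
/-- The degree-`d` part of `v` for the grading of `κ → R` in which the `j`-th basis vector
has degree `D j`. -/
def shiftedProj (D : κ → G) (d : G) (v : κ → R) : κ → R :=
  fun j => decompose 𝒜 (v j) (d - D j)

theorem mem_of_forall_shiftedProj_mem {J : Ideal R} (hJ : J.IsHomogeneous 𝒜) {D : κ → G}
    {v : κ → R} (h : ∀ d j, shiftedProj 𝒜 D d v j ∈ J) (j : κ) : v j ∈ J :=
  hJ.mem_iff.2 fun g => by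
    have := h (g + D j) j
    rwa [shiftedProj, add_sub_cancel_right] at this

variable [Fintype κ]

theorem linearCombination_shiftedProj {x : κ → M} {D : κ → G} (hx : ∀ j, x j ∈ ℳ (D j))
    (d : G) (v : κ → R) :
    Fintype.linearCombination R x (shiftedProj 𝒜 D d v) =
      decompose ℳ (Fintype.linearCombination R x v) d := by
  rw [Fintype.linearCombination_apply, Fintype.linearCombination_apply, decompose_sum,
    DirectSum.sum_apply, AddSubmonoidClass.coe_finsetSum]
  refine Finset.sum_congr rfl fun j _ => ?_
  rw [shiftedProj, ← coe_decompose_smul_add_of_right_mem 𝒜 ℳ (v j) (hx j), sub_add_cancel]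

theorem linearIndependent_of_span_image_compl_ne_top [Module.Projective R M] {J : Ideal R}
    (hJ : J.IsHomogeneous 𝒜) (hJ_ne : J ≠ ⊤) (hunit : ∀ {i a}, a ∈ 𝒜 i → a ∉ J → IsUnit a)
    {x : κ → M} {D : κ → G} (hx : ∀ j, x j ∈ ℳ (D j)) (hspan : span R (Set.range x) = ⊤)
    (hmin : ∀ i, span R (x '' {i}ᶜ) ≠ ⊤) : LinearIndependent R x := by
  set φ := Fintype.linearCombination R x
  have hsurj : Function.Surjective φ := by
    rw [← LinearMap.range_eq_top, Fintype.range_linearCombination, hspan]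
  have hproj : ∀ v ∈ LinearMap.ker φ, ∀ d, shiftedProj 𝒜 D d v ∈ LinearMap.ker φ :=
    fun v hv d => by
      rw [LinearMap.mem_ker, linearCombination_shiftedProj hx, LinearMap.mem_ker.1 hv,
        decompose_zero, DirectSum.zero_apply, ZeroMemClass.coe_zero]
  have hker_J : LinearMap.ker φ ≤ J • ⊤ := fun v hv =>
    mem_smul_top_of_forall_apply_mem (mem_of_forall_shiftedProj_mem hJ fun d j => by
      by_contra hj
      apply hmin j
      rw [← hspan, ← Set.insert_image_compl_eq_range, span_insert_eq_span]
      exact mem_span_image_compl_of_sum_smul_eq_zero (hproj v hv d) (hunit (SetLike.coe_mem _) hj))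
  have := Module.Finite.of_surjective φ hsurj
  have := Module.finitePresentation_of_projective R M
  obtain ⟨s, hs⟩ := Module.projective_lifting_property φ LinearMap.id hsurj
  obtain ⟨r, hr, hrK⟩ := exists_sub_one_mem_and_smul_eq_zero_of_fg_of_le_smul J (LinearMap.ker φ)
    (Module.FinitePresentation.fg_ker φ hsurj) (LinearMap.ker_le_smul_ker_of_comp_eq_id hs hker_J)
  refine Fintype.linearIndependent_iff.2 fun v hv => ?_
  have hparts : ∀ d j, shiftedProj 𝒜 D d v j ∈ (⊥ : Ideal R) := fun d j =>
    Ideal.mem_bot.2 <| hJ.eq_zero_of_mul_eq_zero_of_sub_one_mem hJ_ne hunit hr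
      (SetLike.coe_mem _) (congr_fun (hrK _ (hproj v hv d)) j)
  exact fun j =>
    Ideal.mem_bot.1 (mem_of_forall_shiftedProj_mem (Ideal.IsHomogeneous.bot 𝒜) hparts j)

end GradedModule

/-- Let `R` be a commutative `G`-graded ring possessing a unique maximal homogeneous ideal
and let `M` be a finitely generated `G`-graded `R`-module. If `M` is projective as an
`R`-module, then `M` is free as an `R`-module. -/
theorem graded_projective_free_of_unique_maximal_homogeneous {G R M : Type*}
    [AddCommGroup G] [DecidableEq G] [CommRing R]
    (𝒜 : G → AddSubgroup R) [GradedRing 𝒜]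
    (hunique : ∃! J : Ideal R, Ideal.IsHomogeneous 𝒜 J ∧ J ≠ ⊤ ∧
      ∀ K : Ideal R, Ideal.IsHomogeneous 𝒜 K → K ≠ ⊤ → J ≤ K → K = J)
    [AddCommGroup M] [Module R M] (ℳ : G → AddSubgroup M)
    [DirectSum.Decomposition ℳ] [SetLike.GradedSMul 𝒜 ℳ]
    [Module.Finite R M] (hproj : Module.Projective R M) :
    Module.Free R M := by
  obtain ⟨J, ⟨hJ, hJ_ne, -⟩, hJ_unique⟩ := hunique
  obtain ⟨t, ht⟩ := exists_finset_span_decompose_eq_top (R := R) ℳ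
  obtain ⟨u, hu_span, hu_min⟩ := Submodule.exists_finset_span_image_compl_ne_top ht
  have hli := linearIndependent_of_span_image_compl_ne_top hJ hJ_ne
    (Ideal.isUnit_of_mem_of_notMem hJ_unique) (D := fun p : u => p.1.2)
    (fun _ => SetLike.coe_mem _) hu_span hu_min
  exact Module.Free.of_basis (Module.Basis.mk hli hu_span.ge)
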